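/- For the function f of the previous statement (staircase function with flat pieces, equal to its even reflection for x < 0), the set ℝ × {0} is contained in the contingent cone to gph ∂f at (0,0), where ∂f denotes the limiting (or proximal) subdifferential. Consequently, for every w ≠ 0, 0 ∈ D(∂f)(0|0)(w) and ⟨0, w⟩ = 0, so the subgradient graphical derivative at (0,0) is not positive definite even though 0 is a strong local minimizer. -/

import Mathlib

/-!
The midpoints `±7/2^(n+3)` of the flat steps of `f` are local minimizers, so `0` is a proximal,
hence limiting, subgradient there. Since these points tend to `0` from both sides, the horizontal
directions `(±1, 0)` are tangent to `gph ∂f` at the origin, and the contingent cone is a cone.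
-/

open Filter

/-- The Bouligand (contingent) tangent cone to a set `s` at a point `p`. -/
def contingentCone {F : Type*} [NormedAddCommGroup F] [NormedSpace ℝ F]
    (s : Set F) (p : F) : Set F :=
  {v | ∃ t : ℕ → ℝ, ∃ w : ℕ → F, (∀ k, 0 < t k) ∧ Tendsto t atTop (nhds 0) ∧
    Tendsto w atTop (nhds v) ∧ ∀ k, p + t k • w k ∈ s}

/-- The proximal subdifferential of a real-valued function on `ℝ`. -/
def proxSubdiffR (f : ℝ → ℝ) (x : ℝ) : Set ℝ :=
  {v | ∃ r > (0 : ℝ), ∃ ε > (0 : ℝ), ∀ u, |u - x| ≤ ε →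
    f x + (v * (u - x) - r / 2 * (u - x) ^ 2) ≤ f u}

/-- The limiting (Mordukhovich) subdifferential of a real-valued function on `ℝ`,
obtained from proximal subgradients by taking limits. -/
def limSubdiffR (f : ℝ → ℝ) (x : ℝ) : Set ℝ :=
  {v | ∃ xs vs : ℕ → ℝ, Tendsto xs atTop (nhds x) ∧ Tendsto vs atTop (nhds v) ∧
    (∀ k, vs k ∈ proxSubdiffR f (xs k)) ∧ Tendsto (fun k => f (xs k)) atTop (nhds (f x))}

open Topology

section ContingentCone

variable {F : Type*} [NormedAddCommGroup F] [NormedSpace ℝ F] {s : Set F} {p v : F}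

theorem mem_contingentCone_of_forall_add_smul_mem {t : ℕ → ℝ} (ht_pos : ∀ k, 0 < t k)
    (ht : Tendsto t atTop (𝓝 0)) (hs : ∀ k, p + t k • v ∈ s) : v ∈ contingentCone s p :=
  ⟨t, fun _ => v, ht_pos, ht, tendsto_const_nhds, hs⟩

theorem smul_mem_contingentCone {c : ℝ} (hc : 0 ≤ c) (hv : v ∈ contingentCone s p) :
    c • v ∈ contingentCone s p := by
  obtain ⟨t, w, ht_pos, ht, hw, hs⟩ := hv
  rcases hc.eq_or_lt with rfl | hc
  · -- for `c = 0`, move a factor `√(t k)` of the step size into the direction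
    have hsqrt : Tendsto (fun k => √(t k)) atTop (𝓝 0) :=
      (Real.continuous_sqrt.tendsto' 0 0 Real.sqrt_zero).comp ht
    refine ⟨fun k => √(t k), fun k => √(t k) • w k, fun k => Real.sqrt_pos.2 (ht_pos k),
      hsqrt, by simpa using hsqrt.smul hw, fun k => ?_⟩
    rw [smul_smul, Real.mul_self_sqrt (ht_pos k).le]
    exact hs k
  · refine ⟨fun k => t k / c, fun k => c • w k, fun k => div_pos (ht_pos k) hc,
      by simpa using ht.div_const c, hw.const_smul c, fun k => ?_⟩
    rw [smul_smul, div_mul_cancel₀ _ hc.ne']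
    exact hs k

end ContingentCone

section Subdifferential

variable {f : ℝ → ℝ} {x : ℝ}

theorem zero_mem_proxSubdiffR_of_isLocalMin (h : IsLocalMin f x) : 0 ∈ proxSubdiffR f x := by
  obtain ⟨ε, hε, hmin⟩ := Metric.nhds_basis_closedBall.eventually_iff.1 h
  refine ⟨1, one_pos, ε, hε, fun u hu => ?_⟩
  have hxu : f x ≤ f u := hmin (by rwa [Metric.mem_closedBall, Real.dist_eq])
  nlinarith [sq_nonneg (u - x)]

theorem proxSubdiffR_subset_limSubdiffR : proxSubdiffR f x ⊆ limSubdiffR f x := fun _ hv =>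
  ⟨fun _ => x, fun _ => _, tendsto_const_nhds, tendsto_const_nhds, fun _ => hv,
    tendsto_const_nhds⟩

theorem IsLocalMin.neg_of_reflect (hrefl : ∀ y : ℝ, y < 0 → f y = f (-y)) (hx : 0 < x)
    (h : IsLocalMin f x) : IsLocalMin f (-x) := by
  have hcomp : IsLocalMin (f ∘ Neg.neg) (-x) :=
    IsLocalMin.comp_continuous (by rwa [neg_neg]) continuous_neg.continuousAt
  exact hcomp.congr <| (eventually_lt_nhds (neg_neg_of_pos hx)).mono fun y hy => (hrefl y hy).symm

end Subdifferential

theorem tendsto_staircase_midpoint :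
    Tendsto (fun n : ℕ => (7 : ℝ) / 2 ^ (n + 3)) atTop (𝓝 0) :=
  tendsto_const_nhds.div_atTop <|
    (tendsto_pow_atTop_atTop_of_one_lt one_lt_two).comp (tendsto_add_atTop_nat 3)

theorem isLocalMin_staircase_midpoint {f : ℝ → ℝ}
    (hflat : ∀ n : ℕ, ∀ x : ℝ, 3 / 2 ^ (n + 2) ≤ x → x < 1 / 2 ^ n → f x = 1 / 2 ^ n) (n : ℕ) :
    IsLocalMin f (7 / 2 ^ (n + 3)) := by
  have hpow : (0 : ℝ) < 2 ^ n := by positivity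
  have hlo : (3 : ℝ) / 2 ^ (n + 2) < 7 / 2 ^ (n + 3) := by
    rw [pow_add, pow_add, div_lt_div_iff₀ (by positivity) (by positivity)]
    nlinarith
  have hhi : (7 : ℝ) / 2 ^ (n + 3) < 1 / 2 ^ n := by
    rw [pow_add, div_lt_div_iff₀ (by positivity) hpow]
    nlinarith
  have hconst : (fun _ => (1 : ℝ) / 2 ^ n) =ᶠ[𝓝 (7 / 2 ^ (n + 3))] f :=
    eventually_of_mem (Ioo_mem_nhds hlo hhi) fun x hx => (hflat n x hx.1.le hx.2).symm
  exact isLocalMin_const.congr hconst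

theorem stmt12_general (f : ℝ → ℝ)
    (h2 : ∀ n : ℕ, ∀ x : ℝ, 3 / 2 ^ (n + 2) ≤ x → x < 1 / 2 ^ n → f x = 1 / 2 ^ n)
    (h4 : ∀ x : ℝ, x < 0 → f x = f (-x)) :
    (Set.univ ×ˢ ({0} : Set ℝ)) ⊆
      contingentCone {p : ℝ × ℝ | p.2 ∈ limSubdiffR f p.1} ((0 : ℝ), (0 : ℝ)) := by
  set gph := {p : ℝ × ℝ | p.2 ∈ limSubdiffR f p.1}
  have hzero : ∀ {x}, IsLocalMin f x → (x, 0) ∈ gph := fun h =>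
    proxSubdiffR_subset_limSubdiffR (zero_mem_proxSubdiffR_of_isLocalMin h)
  have hpos : ∀ n : ℕ, (0 : ℝ) < 7 / 2 ^ (n + 3) := fun n => by positivity
  have hright : ((1 : ℝ), (0 : ℝ)) ∈ contingentCone gph (0, 0) :=
    mem_contingentCone_of_forall_add_smul_mem hpos tendsto_staircase_midpoint fun n => by
      simpa using hzero (isLocalMin_staircase_midpoint h2 n)
  have hleft : ((-1 : ℝ), (0 : ℝ)) ∈ contingentCone gph (0, 0) :=
    mem_contingentCone_of_forall_add_smul_mem hpos tendsto_staircase_midpoint fun n => by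
      simpa using hzero ((isLocalMin_staircase_midpoint h2 n).neg_of_reflect h4 (hpos n))
  rintro ⟨w, _⟩ ⟨-, rfl⟩
  rcases le_total 0 w with hw | hw
  · simpa using smul_mem_contingentCone hw hright
  · simpa using smul_mem_contingentCone (neg_nonneg.2 hw) hleft

/-- For the staircase function of Example 3.6, `ℝ × {0}` is contained in the contingent cone
to `gph ∂f` at `(0,0)`; in particular `0 ∈ D(∂f)(0|0)(w)` for every `w`, so the subgradient
graphical derivative at `(0,0)` is not positive definite although `0` is a strong local
minimizer. -/
theorem stmt12 (f : ℝ → ℝ)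
    (h0 : f 0 = 0)
    (h1 : ∀ x : ℝ, 1 ≤ x → f x = x)
    (h2 : ∀ n : ℕ, ∀ x : ℝ, 3 / 2 ^ (n + 2) ≤ x → x < 1 / 2 ^ n → f x = 1 / 2 ^ n)
    (h3 : ∀ n : ℕ, ∀ x : ℝ, 1 / 2 ^ (n + 1) ≤ x → x < 3 / 2 ^ (n + 2) →
      f x = 2 * x - 1 / 2 ^ (n + 1))
    (h4 : ∀ x : ℝ, x < 0 → f x = f (-x)) :
    (Set.univ ×ˢ ({0} : Set ℝ)) ⊆
      contingentCone {p : ℝ × ℝ | p.2 ∈ limSubdiffR f p.1} ((0 : ℝ), (0 : ℝ)) :=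
  stmt12_general f h2 h4
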